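/- arXiv:2511.10224 — 4 statements merged into one kernel-verified Lean document; each statement's English description precedes it below -/
import Mathlib

section
/- Let M be an x-monotone polygon and let p, q, r be three distinct points in M with x(p) < x(q) < x(r). If Vis(p) ∩ Vis(q) = ∅ and Vis(q) ∩ Vis(r) = ∅, then Vis(p) ∩ Vis(r) = ∅. -/
def Vis (M : Set (ℝ × ℝ)) (x : ℝ × ℝ) : Set (ℝ × ℝ) :=
  {z ∈ M | segment ℝ x z ⊆ M}

lemma exists_on_segment (a z : ℝ × ℝ) (c : ℝ) (h1 : a.1 ≤ c) (h2 : c ≤ z.1) :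
    ∃ w ∈ segment ℝ a z, w.1 = c := by
  rcases eq_or_lt_of_le (h1.trans h2) with h | h
  · exact ⟨a, left_mem_segment ℝ a z, le_antisymm h1 (h2.trans_eq h.symm)⟩
  · set t : ℝ := (c - a.1) / (z.1 - a.1) with htdef
    have ht0 : 0 ≤ t := div_nonneg (by linarith) (by linarith)
    have ht1 : t ≤ 1 := by rw [div_le_one (by linarith)]; linarith
    refine ⟨(1 - t) • a + t • z, ⟨1 - t, t, by linarith, ht0, by ring, rfl⟩, ?_⟩
    have ht : t * (z.1 - a.1) = c - a.1 := div_mul_cancel₀ _ (by linarith)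
    simp only [Prod.fst_add, Prod.smul_fst, smul_eq_mul]
    linear_combination ht

/-- In an x-monotone polygon, disjointness of visibility regions is transitive
along the x-order: if `x(p) < x(q) < x(r)`, `Vis(p) ∩ Vis(q) = ∅` and
`Vis(q) ∩ Vis(r) = ∅`, then `Vis(p) ∩ Vis(r) = ∅`. -/
theorem vis_disjoint_trans (M : Set (ℝ × ℝ))
    (hmono : ∀ c : ℝ, Convex ℝ {z ∈ M | z.1 = c})
    (p q r : ℝ × ℝ) (hp : p ∈ M) (hq : q ∈ M) (hr : r ∈ M)
    (hpq : p.1 < q.1) (hqr : q.1 < r.1)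
    (h1 : Vis M p ∩ Vis M q = ∅) (h2 : Vis M q ∩ Vis M r = ∅) :
    Vis M p ∩ Vis M r = ∅ := by
  rw [Set.eq_empty_iff_forall_notMem]
  rintro z ⟨⟨hzM, hpz⟩, _, hrz⟩
  rcases le_or_gt q.1 z.1 with hc | hc
  · obtain ⟨w, hwseg, hw1⟩ := exists_on_segment p z q.1 hpq.le hc
    have hwM : w ∈ M := hpz hwseg
    have hwVp : w ∈ Vis M p :=
      ⟨hwM, ((convex_segment p z).segment_subset (left_mem_segment ℝ p z) hwseg).trans hpz⟩
    have hwVq : w ∈ Vis M q :=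
      ⟨hwM, fun x hx => ((hmono q.1).segment_subset ⟨hq, rfl⟩ ⟨hwM, hw1⟩ hx).1⟩
    exact Set.eq_empty_iff_forall_notMem.mp h1 w ⟨hwVp, hwVq⟩
  · obtain ⟨w, hwseg, hw1⟩ := exists_on_segment z r q.1 hc.le hqr.le
    have hwseg' : w ∈ segment ℝ r z := by rwa [segment_symm] at hwseg
    have hwM : w ∈ M := hrz hwseg'
    have hwVr : w ∈ Vis M r :=
      ⟨hwM, ((convex_segment r z).segment_subset (left_mem_segment ℝ r z) hwseg').trans hrz⟩
    have hwVq : w ∈ Vis M q :=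
      ⟨hwM, fun x hx => ((hmono q.1).segment_subset ⟨hq, rfl⟩ ⟨hwM, hw1⟩ hx).1⟩
    exact Set.eq_empty_iff_forall_notMem.mp h2 w ⟨hwVq, hwVr⟩
end

section
/- Let F be a finite set of points in an x-monotone polygon M, with all points of F having pairwise distinct x-coordinates. Define a graph G on vertex set F with an edge between a and b if and only if Vis(a) ∩ Vis(b) ≠ ∅. Then the complement of G admits a transitive orientation; i.e., G is a co-comparability graph. -/
lemma cross_vertical (p q : ℝ × ℝ) (t : ℝ) (h1 : p.1 ≤ t) (h2 : t ≤ q.1) :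
    ∃ w ∈ segment ℝ p q, w.1 = t := by
  have himg : ((LinearMap.fst ℝ ℝ ℝ).toAffineMap) '' segment ℝ p q = segment ℝ p.1 q.1 :=
    image_segment ℝ _ p q
  have ht : t ∈ segment ℝ p.1 q.1 := by
    rw [segment_eq_Icc (le_trans h1 h2)]
    exact ⟨h1, h2⟩
  rw [← himg] at ht
  obtain ⟨w, hw, hwt⟩ := ht
  exact ⟨w, hw, hwt⟩

lemma key_disjoint (M : Set (ℝ × ℝ))
    (hmono : ∀ c : ℝ, Convex ℝ {z ∈ M | z.1 = c})
    (a b c : ℝ × ℝ) (hb : b ∈ M)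
    (hab : a.1 < b.1) (hbc : b.1 < c.1)
    (h1 : Vis M a ∩ Vis M b = ∅) (h2 : Vis M b ∩ Vis M c = ∅) :
    Vis M a ∩ Vis M c = ∅ := by
  by_contra h
  obtain ⟨z, ⟨hza, hsa⟩, ⟨hzc, hsc⟩⟩ := Set.nonempty_iff_ne_empty.2 h
  rcases le_total b.1 z.1 with hz | hz
  · -- segment a z crosses x = b.1
    obtain ⟨w, hw, hwt⟩ := cross_vertical a z b.1 hab.le hz
    have hwM : w ∈ M := hsa hw
    have hwa : w ∈ Vis M a := by
      refine ⟨hwM, fun y hy => hsa ?_⟩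
      exact (convex_segment a z).segment_subset (left_mem_segment ℝ a z) hw hy
    have hwb : w ∈ Vis M b := by
      refine ⟨hwM, fun y hy => ?_⟩
      have := (hmono b.1).segment_subset ⟨hb, rfl⟩ ⟨hwM, hwt⟩ hy
      exact this.1
    exact Set.eq_empty_iff_forall_notMem.1 h1 w ⟨hwa, hwb⟩
  · -- segment c z crosses x = b.1
    obtain ⟨w, hw, hwt⟩ := cross_vertical z c b.1 hz hbc.le
    rw [segment_symm] at hw
    have hwM : w ∈ M := hsc hw
    have hwc : w ∈ Vis M c := by
      refine ⟨hwM, fun y hy => hsc ?_⟩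
      exact (convex_segment c z).segment_subset (left_mem_segment ℝ c z) hw hy
    have hwb : w ∈ Vis M b := by
      refine ⟨hwM, fun y hy => ?_⟩
      have := (hmono b.1).segment_subset ⟨hb, rfl⟩ ⟨hwM, hwt⟩ hy
      exact this.1
    exact Set.eq_empty_iff_forall_notMem.1 h2 w ⟨hwb, hwc⟩

/-- The visibility intersection graph of a finite point set `F` (with pairwise
distinct x-coordinates) in an x-monotone polygon is a co-comparability graph:
its complement (the disjointness relation of visibility regions) admits a
transitive orientation. -/
theorem vig_cocomparable (M : Set (ℝ × ℝ))
    (hmono : ∀ c : ℝ, Convex ℝ {z ∈ M | z.1 = c})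
    (F : Finset (ℝ × ℝ)) (hF : ↑F ⊆ M)
    (hdistinct : ∀ a ∈ F, ∀ b ∈ F, a ≠ b → a.1 ≠ b.1) :
    ∃ R : ℝ × ℝ → ℝ × ℝ → Prop,
      (∀ a b, R a b → a ∈ F ∧ b ∈ F ∧ a ≠ b ∧ Vis M a ∩ Vis M b = ∅) ∧
      (∀ a ∈ F, ∀ b ∈ F, a ≠ b → Vis M a ∩ Vis M b = ∅ → (R a b ∨ R b a)) ∧
      (∀ a b, R a b → ¬ R b a) ∧
      (∀ a b c, R a b → R b c → R a c) := by
  refine ⟨fun a b => a ∈ F ∧ b ∈ F ∧ a ≠ b ∧ Vis M a ∩ Vis M b = ∅ ∧ a.1 < b.1,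
    fun a b h => ⟨h.1, h.2.1, h.2.2.1, h.2.2.2.1⟩, ?_, ?_, ?_⟩
  · intro a ha b hb hne hdis
    rcases lt_or_gt_of_ne (hdistinct a ha b hb hne) with h | h
    · exact Or.inl ⟨ha, hb, hne, hdis, h⟩
    · exact Or.inr ⟨hb, ha, hne.symm, by rwa [Set.inter_comm], h⟩
  · rintro a b ⟨-, -, -, -, h⟩ ⟨-, -, -, -, h'⟩
    exact absurd h' (not_lt.2 h.le)
  · rintro a b c ⟨ha, hb, -, hdab, h1⟩ ⟨-, hc, -, hdbc, h2⟩
    refine ⟨ha, hc, fun he => ?_, key_disjoint M hmono a b c (hF hb) h1 h2 hdab hdbc,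
      h1.trans h2⟩
    exact absurd (he ▸ (h1.trans h2)) (lt_irrefl _)
end

section
/- Let a, b be points in an x-monotone polygon M with x(a) < x(b). If x(b) ≤ x(xMax(Vis(a))), where xMax(Vis(a)) is a point of Vis(a) with maximum x-coordinate, then Vis(a) ∩ Vis(b) ≠ ∅. -/
/-- Let `a, b` be points of an x-monotone polygon `M` with `x(a) < x(b)`.
If `x(b) ≤ x(xMax(Vis(a)))`, where `m = xMax(Vis(a))` is a point of `Vis(a)` of
maximum x-coordinate, then `Vis(a) ∩ Vis(b) ≠ ∅`. -/
theorem vis_intersect_of_x_le (M : Set (ℝ × ℝ))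
    (hmono : ∀ c : ℝ, Convex ℝ {z ∈ M | z.1 = c})
    (a b : ℝ × ℝ) (ha : a ∈ M) (hb : b ∈ M) (hab : a.1 < b.1)
    (m : ℝ × ℝ) (hm : m ∈ Vis M a) (hmax : ∀ z ∈ Vis M a, z.1 ≤ m.1)
    (hble : b.1 ≤ m.1) :
    (Vis M a ∩ Vis M b).Nonempty := by
  obtain ⟨hmM, hseg⟩ := hm
  have hden : (0:ℝ) < m.1 - a.1 := by linarith
  set t : ℝ := (b.1 - a.1) / (m.1 - a.1) with ht
  have ht0 : 0 ≤ t := div_nonneg (by linarith) hden.le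
  have ht1 : t ≤ 1 := by
    rw [ht, div_le_one hden]; linarith
  set p : ℝ × ℝ := (1 - t) • a + t • m with hp
  have hpseg : p ∈ segment ℝ a m := ⟨1 - t, t, by linarith, ht0, by ring, rfl⟩
  have hpx : p.1 = b.1 := by
    have : p.1 = (1 - t) * a.1 + t * m.1 := rfl
    rw [this, ht]
    field_simp
    ring
  have hpM : p ∈ M := hseg hpseg
  have hpVisA : p ∈ Vis M a := by
    refine ⟨hpM, ?_⟩
    have : segment ℝ a p ⊆ segment ℝ a m :=
      (convex_segment a m).segment_subset (left_mem_segment ℝ a m) hpseg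
    exact this.trans hseg
  have hpVisB : p ∈ Vis M b := by
    refine ⟨hpM, ?_⟩
    have hsub : segment ℝ b p ⊆ {z ∈ M | z.1 = b.1} :=
      (hmono b.1).segment_subset ⟨hb, rfl⟩ ⟨hpM, hpx⟩
    exact hsub.trans (Set.sep_subset _ _)
  exact ⟨p, hpVisA, hpVisB⟩
end

section
/- Let W = {w_1, …, w_k} be a witness set in an x-monotone polygon M with x(w_1) < x(w_2) < … < x(w_k), and let w be a point of M with x(w_i) < x(w) < x(w_{i+1}) for some 1 ≤ i < k. If Vis(w) ∩ Vis(w_i) = ∅ and Vis(w) ∩ Vis(w_{i+1}) = ∅, then W ∪ {w} is a witness set in M. -/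
/-!
If some `z` sees both `a` and `c`, and `x(b)` lies between `x(a)` and `x(c)`, then one of the
segments `[a, z]`, `[z, c]` crosses the vertical line through `b`. The crossing point sees `b`
because vertical slices of `M` are convex, so `Vis(b)` meets `Vis(a)` or `Vis(c)`. Hence
disjointness of visibility regions is transitive along the x-order, and a new witness only has
to be checked against its two x-neighbours in `W`.
-/

open Set

lemma exists_mem_segment_fst_eq {u v : ℝ × ℝ} {c : ℝ} (hc : c ∈ segment ℝ u.1 v.1) :
    ∃ q ∈ segment ℝ u v, q.1 = c := by
  have := image_segment ℝ (LinearMap.fst ℝ ℝ ℝ).toAffineMap u v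
  simp only [LinearMap.coe_toAffineMap, LinearMap.coe_fst] at this
  rwa [← this] at hc

section Visibility

variable {M : Set (ℝ × ℝ)}

lemma mem_vis_of_fst_eq (hmono : ∀ c : ℝ, Convex ℝ {z ∈ M | z.1 = c})
    {b q : ℝ × ℝ} (hb : b ∈ M) (hq : q ∈ M) (hqb : q.1 = b.1) : q ∈ Vis M b :=
  ⟨hq, fun _ hy => ((hmono b.1).segment_subset ⟨hb, rfl⟩ ⟨hq, hqb⟩ hy).1⟩

lemma vis_inter_vis_nonempty_of_fst_mem_segment (hmono : ∀ c : ℝ, Convex ℝ {z ∈ M | z.1 = c})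
    {a b z : ℝ × ℝ} (hz : z ∈ Vis M a) (hb : b ∈ M) (hab : b.1 ∈ segment ℝ a.1 z.1) :
    (Vis M a ∩ Vis M b).Nonempty := by
  obtain ⟨q, hq, hqb⟩ := exists_mem_segment_fst_eq hab
  have haq : segment ℝ a q ⊆ M :=
    ((convex_segment a z).segment_subset (left_mem_segment ℝ a z) hq).trans hz.2
  have hqM : q ∈ M := haq (right_mem_segment ℝ a q)
  exact ⟨q, ⟨hqM, haq⟩, mem_vis_of_fst_eq hmono hb hqM hqb⟩

lemma vis_inter_eq_empty_trans (hmono : ∀ c : ℝ, Convex ℝ {z ∈ M | z.1 = c})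
    {a b c : ℝ × ℝ} (hb : b ∈ M) (hab : a.1 ≤ b.1) (hbc : b.1 ≤ c.1)
    (h₁ : Vis M a ∩ Vis M b = ∅) (h₂ : Vis M b ∩ Vis M c = ∅) :
    Vis M a ∩ Vis M c = ∅ := by
  refine eq_empty_of_forall_notMem fun z ⟨hza, hzc⟩ => ?_
  rcases le_total b.1 z.1 with hbz | hzb
  · have := vis_inter_vis_nonempty_of_fst_mem_segment hmono hza hb (Icc_subset_segment ⟨hab, hbz⟩)
    exact this.ne_empty h₁
  · have := vis_inter_vis_nonempty_of_fst_mem_segment hmono hzc hb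
      (segment_symm ℝ z.1 c.1 ▸ Icc_subset_segment ⟨hzb, hbc⟩)
    rw [inter_comm] at this
    exact this.ne_empty h₂

end Visibility

/-- Let `W = {w_1, …, w_k}` be a witness set of an x-monotone polygon `M`, sorted
by x-coordinate, and `p ∈ M` with `x(w_i) < x(p) < x(w_{i+1})`. If `Vis(p)` is
disjoint from `Vis(w_i)` and from `Vis(w_{i+1})`, then `W ∪ {p}` is a witness set. -/
theorem insert_witness (M : Set (ℝ × ℝ))
    (hmono : ∀ c : ℝ, Convex ℝ {z ∈ M | z.1 = c})
    (k : ℕ) (w : Fin k → ℝ × ℝ) (hwM : ∀ i, w i ∈ M)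
    (hsorted : ∀ i j : Fin k, i < j → (w i).1 < (w j).1)
    (hwitness : ∀ i j : Fin k, i ≠ j → Vis M (w i) ∩ Vis M (w j) = ∅)
    (i : ℕ) (hi : i + 1 < k)
    (p : ℝ × ℝ)
    (hx1 : (w ⟨i, by omega⟩).1 < p.1) (hx2 : p.1 < (w ⟨i + 1, hi⟩).1)
    (hd1 : Vis M p ∩ Vis M (w ⟨i, by omega⟩) = ∅)
    (hd2 : Vis M p ∩ Vis M (w ⟨i + 1, hi⟩) = ∅) :
    (insert p (Set.range w)).Pairwise fun u v => Vis M u ∩ Vis M v = ∅ := by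
  have hsymm : Std.Symm fun u v : ℝ × ℝ => Vis M u ∩ Vis M v = ∅ :=
    ⟨fun u v h => (inter_comm _ _).trans h⟩
  refine pairwise_insert_of_symm.2 ⟨?_, ?_⟩
  · rintro _ ⟨j, rfl⟩ _ ⟨j', rfl⟩ hne
    exact hwitness j j' (ne_of_apply_ne w hne)
  · rintro _ ⟨j, rfl⟩ -
    set l : Fin k := ⟨i, by omega⟩
    set r : Fin k := ⟨i + 1, hi⟩
    rcases le_or_gt j l with hjl | hlj
    · rcases hjl.eq_or_lt with rfl | hjl
      · exact hd1
      · exact hsymm.symm _ _ <| vis_inter_eq_empty_trans hmono (hwM l) (hsorted j l hjl).le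
          hx1.le (hwitness j l hjl.ne) (hsymm.symm _ _ hd1)
    · have hrj : r ≤ j := Fin.le_def.2 (Nat.succ_le_of_lt hlj)
      rcases hrj.eq_or_lt with rfl | hrj
      · exact hd2
      · exact vis_inter_eq_empty_trans hmono (hwM r) hx2.le (hsorted r j hrj).le hd2
          (hwitness r j hrj.ne)
end
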